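/- arXiv:1401.5022 — 7 statements merged into one kernel-verified Lean document; each statement's English description precedes it below -/
import Mathlib

section
/- Let a_1 ≤ a_2 be reals, K = [a_1,a_2], φ(t) = (t, t²), L = φ(K) ⊆ ℝ², and Λ = convexHull(L). Let c = (c_1,c_2) and q = (q_1,q_2) be vectors in ℝ² such that one of the following holds: (1) q_1 + q_2(a_1+a_2) = 0 and c_1 q_2 − c_2 q_1 ≠ 0; or (2) (q_1 + q_2(a_1+a_2)) · (c_1 q_2 − c_2 q_1) < 0. Then for every ξ ∈ ℝ such that the set S_ξ = {m ∈ Λ : q·m = ξ} is nonempty, every point of S_ξ at which m ↦ c·m attains its minimum over S_ξ belongs to L. -/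
/-!
The convex hull of the parabolic arc is the region between the parabola `y = x²` and its chord
over `[a1, a2]`. Write `D = c1 q2 - c2 q1`. At a point of the hull strictly above the parabola,
moving in the direction `D • (-q2, q1)` keeps `q · m` fixed and lowers `c · m` by `t D²`. The sign
condition on `(q1 + q2 (a1 + a2)) D` makes this direction point weakly below the chord, and the
parabola constraint is strict there, so small steps stay in the hull. A minimiser must therefore
lie on the parabola.
-/

open Set Filter Topology Convex

-- The chord through `(a1, a1²)` and `(a2, a2²)` is `y = (a1 + a2) x - a1 a2`.
def parabolicRegion (a1 a2 : ℝ) : Set (ℝ × ℝ) :=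
  {p | p.1 ^ 2 ≤ p.2 ∧ p.2 ≤ (a1 + a2) * p.1 - a1 * a2}

lemma mem_Icc_of_sq_le_chord {a1 a2 x : ℝ} (ha : a1 ≤ a2)
    (hx : x ^ 2 ≤ (a1 + a2) * x - a1 * a2) : x ∈ Icc a1 a2 := by
  have hprod : (x - a1) * (x - a2) ≤ 0 := by linarith
  constructor <;> nlinarith

lemma convex_parabolicRegion (a1 a2 : ℝ) : Convex ℝ (parabolicRegion a1 a2) := by
  have hepi : Convex ℝ {p : ℝ × ℝ | p.1 ^ 2 ≤ p.2} := by
    simpa using (even_two.convexOn_pow (𝕜 := ℝ)).convex_epigraph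
  have hchord : IsLinearMap ℝ fun p : ℝ × ℝ => p.2 - (a1 + a2) * p.1 :=
    ⟨fun p q => by simp only [Prod.fst_add, Prod.snd_add]; ring,
      fun r p => by simp only [Prod.smul_fst, Prod.smul_snd, smul_eq_mul]; ring⟩
  convert hepi.inter (convex_halfSpace_le hchord (-(a1 * a2))) using 1
  ext p
  change _ ∧ _ ↔ _ ∧ p.2 - (a1 + a2) * p.1 ≤ -(a1 * a2)
  exact and_congr_right fun _ => by constructor <;> intro h <;> linarith

lemma image_parabola_subset_parabolicRegion (a1 a2 : ℝ) :
    (fun t : ℝ => (t, t ^ 2)) '' Icc a1 a2 ⊆ parabolicRegion a1 a2 := by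
  rintro _ ⟨t, ⟨ht1, ht2⟩, rfl⟩
  exact ⟨le_rfl, by nlinarith⟩

lemma parabolicRegion_subset_convexHull {a1 a2 : ℝ} (ha : a1 ≤ a2) :
    parabolicRegion a1 a2 ⊆ convexHull ℝ ((fun t : ℝ => (t, t ^ 2)) '' Icc a1 a2) := by
  rintro ⟨x, y⟩ ⟨hlow, hup⟩
  set L := (fun t : ℝ => (t, t ^ 2)) '' Icc a1 a2
  have hx := mem_Icc_of_sq_le_chord ha (hlow.trans hup)
  have hL : ∀ t ∈ Icc a1 a2, (t, t ^ 2) ∈ convexHull ℝ L :=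
    fun t ht => subset_convexHull ℝ L ⟨t, ht, rfl⟩
  have hchord : (x, (a1 + a2) * x - a1 * a2) ∈ convexHull ℝ L := by
    rcases ha.eq_or_lt with rfl | hlt
    · obtain rfl : x = a1 := le_antisymm hx.2 hx.1
      convert hL x hx using 2
      ring
    refine (convex_convexHull ℝ L).segment_subset (hL a1 ⟨le_rfl, ha⟩) (hL a2 ⟨ha, le_rfl⟩) ?_
    rw [segment_eq_image_lineMap]
    refine ⟨(x - a1) / (a2 - a1), ⟨div_nonneg (by linarith [hx.1]) (by linarith),
      (div_le_one (by linarith)).2 (by linarith [hx.2])⟩, ?_⟩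
    rw [AffineMap.lineMap_apply]
    ext <;> simp only [vsub_eq_sub, Prod.mk_sub_mk, Prod.smul_mk, smul_eq_mul, vadd_eq_add,
      Prod.mk_add_mk] <;> field_simp <;> ring
  have hvert : (x, y) ∈ [(x, x ^ 2) -[ℝ] (x, (a1 + a2) * x - a1 * a2)] := by
    rw [← Prod.image_mk_segment_right, segment_eq_Icc (hlow.trans hup)]
    exact ⟨y, ⟨hlow, hup⟩, rfl⟩
  exact (convex_convexHull ℝ L).segment_subset (hL x hx) hchord hvert

lemma convexHull_parabola_eq_parabolicRegion {a1 a2 : ℝ} (ha : a1 ≤ a2) :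
    convexHull ℝ ((fun t : ℝ => (t, t ^ 2)) '' Icc a1 a2) = parabolicRegion a1 a2 :=
  (convexHull_min (image_parabola_subset_parabolicRegion a1 a2)
    (convex_parabolicRegion a1 a2)).antisymm (parabolicRegion_subset_convexHull ha)

lemma exists_pos_add_smul_mem_of_mem_nhds {E : Type*} [AddCommGroup E] [Module ℝ E]
    [TopologicalSpace E] [ContinuousAdd E] [ContinuousSMul ℝ E] {m : E} {U : Set E}
    (hU : U ∈ 𝓝 m) (v : E) : ∃ t : ℝ, 0 < t ∧ m + t • v ∈ U := by
  have hcont : Tendsto (fun t : ℝ => m + t • v) (𝓝 0) (𝓝 m) :=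
    (by fun_prop : Continuous fun t : ℝ => m + t • v).tendsto' 0 m (by simp)
  obtain ⟨t, htU, ht⟩ := ((hcont.eventually hU).filter_mono nhdsWithin_le_nhds |>.and
    (self_mem_nhdsWithin : Ioi (0 : ℝ) ∈ 𝓝[>] 0)).exists
  exact ⟨t, ht, htU⟩

lemma exists_pos_add_smul_mem_parabolicRegion {a1 a2 : ℝ} {m : ℝ × ℝ}
    (hm : m ∈ parabolicRegion a1 a2) (hlow : m.1 ^ 2 < m.2) {v : ℝ × ℝ}
    (hv : v.2 ≤ (a1 + a2) * v.1) : ∃ t : ℝ, 0 < t ∧ m + t • v ∈ parabolicRegion a1 a2 := by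
  have hopen : IsOpen {p : ℝ × ℝ | p.1 ^ 2 < p.2} := isOpen_lt (by fun_prop) (by fun_prop)
  obtain ⟨t, ht, hlow'⟩ := exists_pos_add_smul_mem_of_mem_nhds (hopen.mem_nhds hlow) v
  refine ⟨t, ht, hlow'.le, ?_⟩
  have htv := mul_le_mul_of_nonneg_left hv ht.le
  simp only [Prod.fst_add, Prod.snd_add, Prod.smul_fst, Prod.smul_snd, smul_eq_mul]
  nlinarith [hm.2]

theorem stmt_7
    (a1 a2 : ℝ) (ha : a1 ≤ a2)
    (φ : ℝ → ℝ × ℝ) (hφ : φ = fun t => (t, t ^ 2))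
    (c1 c2 q1 q2 : ℝ)
    (hcases : (q1 + q2 * (a1 + a2) = 0 ∧ c1 * q2 - c2 * q1 ≠ 0) ∨
      ((q1 + q2 * (a1 + a2)) * (c1 * q2 - c2 * q1) < 0)) :
    ∀ ξ : ℝ,
      ({mm ∈ convexHull ℝ (φ '' Set.Icc a1 a2) | q1 * mm.1 + q2 * mm.2 = ξ}).Nonempty →
      ∀ m0 ∈ {mm ∈ convexHull ℝ (φ '' Set.Icc a1 a2) | q1 * mm.1 + q2 * mm.2 = ξ},
        (∀ m' ∈ {mm ∈ convexHull ℝ (φ '' Set.Icc a1 a2) | q1 * mm.1 + q2 * mm.2 = ξ},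
          c1 * m0.1 + c2 * m0.2 ≤ c1 * m'.1 + c2 * m'.2) →
        m0 ∈ φ '' Set.Icc a1 a2 := by
  subst hφ
  simp only [convexHull_parabola_eq_parabolicRegion ha]
  rintro ξ - m0 ⟨hm0, hm0ξ⟩ hmin
  set D := c1 * q2 - c2 * q1
  have hD : D ≠ 0 ∧ (q1 + q2 * (a1 + a2)) * D ≤ 0 := by
    rcases hcases with ⟨h0, hD⟩ | hneg
    · exact ⟨hD, by rw [h0, zero_mul]⟩
    · exact ⟨fun h => by rw [h, mul_zero] at hneg; exact hneg.false, hneg.le⟩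
  rcases hm0.1.eq_or_lt with hpar | hlow
  · exact ⟨m0.1, mem_Icc_of_sq_le_chord ha (hpar ▸ hm0.2), Prod.ext rfl hpar⟩
  obtain ⟨t, ht, hmem⟩ := exists_pos_add_smul_mem_parabolicRegion (v := (-(D * q2), D * q1))
    hm0 hlow (by nlinarith [hD.2])
  have hle := hmin _ ⟨hmem, by simp only [Prod.fst_add, Prod.snd_add, Prod.smul_fst,
    Prod.smul_snd, smul_eq_mul]; linarith⟩
  have hstep : c1 * (m0 + t • (-(D * q2), D * q1)).1 + c2 * (m0 + t • (-(D * q2), D * q1)).2 =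
      c1 * m0.1 + c2 * m0.2 - t * D ^ 2 := by
    simp only [Prod.fst_add, Prod.snd_add, Prod.smul_fst, Prod.smul_snd, smul_eq_mul, D]
    ring
  have hdrop : 0 < t * D ^ 2 := by have := hD.1; positivity
  linarith
end

section
/- Let 0 < a_1 ≤ a_2, K = [a_1,a_2], φ(t) = (t, t², t³), L = φ(K) ⊆ ℝ³, and Λ = convexHull(L). Let c = (0, c_2, c_3) and q = (0, q_2, q_3) in ℝ³ with q_3 ≠ 0, −q_2/q_3 < 0, and c_2 − c_3·(q_2/q_3) < 0. Then for every η ∈ ℝ the function m ↦ (c + ηq)·m has exactly one minimizer over L, and consequently for every ξ ∈ ℝ such that the set S_ξ = {m ∈ Λ : q·m = ξ} is nonempty, every point of S_ξ at which m ↦ c·m attains its minimum over S_ξ belongs to L. -/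
/-!
On the curve, `(c + η • q) ⬝ᵥ φ t = A t² + B t³` with `A = c2 + η q2`, `B = c3 + η q3`, and the
hypotheses say exactly that `B ≤ 0` forces `A < 0`. For such a cubic, equal values at two points
`0 < s < t` force a strictly smaller value at their midpoint, so the minimizer on `[a1, a2]` is
unique.

For the slice `{q ⬝ᵥ m = ξ}`, connectedness of the curve gives a point `φ τ` of the slice on the
curve. Choosing `η` so that `τ` is a critical point of `A t² + B t³` makes `φ τ` the strict
minimizer of `c + η • q` on the curve, hence on its convex hull. A minimizer `m` of `c` on the
slice has `(c + η • q) ⬝ᵥ m ≤ (c + η • q) ⬝ᵥ φ τ`, so `m = φ τ`.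
-/

open Matrix Set

section ConvexHull

variable {E : Type*} [AddCommGroup E] [Module ℝ E]

/-- A segment leaving `p` immediately enters the open half-space `ℓ p < ℓ x`. -/
lemma convex_insert_setOf_lt (ℓ : E →ₗ[ℝ] ℝ) (p : E) : Convex ℝ (insert p {x | ℓ p < ℓ x}) := by
  refine convex_iff_forall_pos.2 fun x hx y hy a b ha hb hab => ?_
  obtain rfl : a = 1 - b := eq_sub_of_add_eq hab
  rcases hx with rfl | hx <;> rcases hy with rfl | hy
  · simp [← add_smul, hab]
  all_goals
    refine Or.inr ?_
    simp only [mem_ofPred_eq, map_add, map_smul, smul_eq_mul] at *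
  · linarith [mul_pos hb (sub_pos.2 hy)]
  · linarith [mul_pos ha (sub_pos.2 hx)]
  · linarith [mul_pos ha (sub_pos.2 hx), mul_pos hb (sub_pos.2 hy)]

lemma eq_of_mem_convexHull_of_apply_le {ℓ : E →ₗ[ℝ] ℝ} {L : Set E} {p m : E}
    (hp : ∀ x ∈ L, x ≠ p → ℓ p < ℓ x) (hm : m ∈ convexHull ℝ L) (hle : ℓ m ≤ ℓ p) : m = p := by
  have hsub : L ⊆ insert p {x | ℓ p < ℓ x} := fun x hx =>
    (eq_or_ne x p).imp id (hp x hx)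
  rcases convexHull_min hsub (convex_insert_setOf_lt ℓ p) hm with h | h
  · exact h
  · exact absurd hle (not_le.2 h)

lemma exists_apply_eq_of_mem_convexHull_image {X : Type*} [TopologicalSpace X] (ℓ : E →ₗ[ℝ] ℝ)
    {f : X → E} {K : Set X} (hK : IsPreconnected K) (hf : ContinuousOn (ℓ ∘ f) K) {m : E}
    (hm : m ∈ convexHull ℝ (f '' K)) : ∃ t ∈ K, ℓ (f t) = ℓ m := by
  have hconv : Convex ℝ ((ℓ ∘ f) '' K) := (hK.image _ hf).convex
  have : ℓ m ∈ (ℓ ∘ f) '' K := by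
    rw [← hconv.convexHull_eq, image_comp, ← LinearMap.image_convexHull]
    exact mem_image_of_mem ℓ hm
  simpa using this

lemma eq_of_mem_convexHull_of_le_of_eq {ℓ μ : E →ₗ[ℝ] ℝ} {η : ℝ} {L : Set E} {p m : E}
    (hp : ∀ x ∈ L, x ≠ p → (ℓ + η • μ) p < (ℓ + η • μ) x) (hm : m ∈ convexHull ℝ L)
    (hμ : μ m = μ p) (hle : ℓ m ≤ ℓ p) : m = p :=
  eq_of_mem_convexHull_of_apply_le hp hm (by simpa [hμ] using hle)

end ConvexHull

lemma existsUnique_min_image {α β γ : Type*} [Preorder γ] {f : α → β} {g : β → γ}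
    {s : Set α} (h : ∃! t, t ∈ s ∧ ∀ t' ∈ s, g (f t) ≤ g (f t')) :
    ∃! m, m ∈ f '' s ∧ ∀ m' ∈ f '' s, g m ≤ g m' := by
  obtain ⟨t, ⟨ht, hmin⟩, huniq⟩ := h
  refine ⟨f t, ⟨mem_image_of_mem f ht, forall_mem_image.2 hmin⟩, ?_⟩
  rintro _ ⟨⟨t', ht', rfl⟩, hmin'⟩
  rw [huniq t' ⟨ht', fun t'' ht'' => hmin' _ (mem_image_of_mem f ht'')⟩]

lemma existsUnique_min_Icc_of_midpoint_lt {f : ℝ → ℝ} {a b : ℝ} (hab : a ≤ b)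
    (hf : ContinuousOn f (Icc a b))
    (hmid : ∀ s ∈ Icc a b, ∀ t ∈ Icc a b, s < t → f s = f t → f ((s + t) / 2) < f s) :
    ∃! t, t ∈ Icc a b ∧ ∀ t' ∈ Icc a b, f t ≤ f t' := by
  obtain ⟨t, ht, hmin⟩ := isCompact_Icc.exists_isMinOn (nonempty_Icc.2 hab) hf
  refine ⟨t, ⟨ht, fun t' ht' => hmin ht'⟩, fun t' ⟨ht', hmin'⟩ => ?_⟩
  have hmem : ∀ {s u}, s ∈ Icc a b → u ∈ Icc a b → (s + u) / 2 ∈ Icc a b := fun hs hu =>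
    ⟨by linarith [hs.1, hu.1], by linarith [hs.2, hu.2]⟩
  have heq : f t' = f t := le_antisymm (hmin' t ht) (hmin ht')
  by_contra hne
  rcases lt_or_gt_of_ne hne with hlt | hlt
  · exact (hmid t' ht' t ht hlt heq).not_ge (hmin' _ (hmem ht' ht))
  · exact (hmid t ht t' ht' hlt heq.symm).not_ge (hmin (hmem ht ht'))

section Cubic

variable {A B : ℝ}

lemma cubic_midpoint_lt (hAB : B ≤ 0 → A < 0) {s t : ℝ} (hs : 0 < s) (hst : s < t)
    (heq : A * s ^ 2 + B * s ^ 3 = A * t ^ 2 + B * t ^ 3) :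
    A * ((s + t) / 2) ^ 2 + B * ((s + t) / 2) ^ 3 < A * s ^ 2 + B * s ^ 3 := by
  have hchord : A * (s + t) + B * (s ^ 2 + s * t + t ^ 2) = 0 := by
    have : (t - s) * (A * (s + t) + B * (s ^ 2 + s * t + t ^ 2)) = 0 := by
      linear_combination -heq
    exact (mul_eq_zero.1 this).resolve_left (sub_ne_zero.2 hst.ne')
  rcases le_or_gt B 0 with hB | hB
  · nlinarith [hAB hB]
  · have key : (s + t) * (A * ((s + t) / 2) ^ 2 + B * ((s + t) / 2) ^ 3 - (A * s ^ 2 + B * s ^ 3))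
        = -(B * (t - s) ^ 2 * (s ^ 2 + 4 * s * t + t ^ 2)) / 8 := by
      linear_combination ((t - s) * (3 * s + t) / 4) * hchord
    have : 0 < B * (t - s) ^ 2 * (s ^ 2 + 4 * s * t + t ^ 2) :=
      mul_pos (mul_pos hB (pow_pos (sub_pos.2 hst) 2)) (by nlinarith)
    nlinarith

lemma existsUnique_min_cubic (hAB : B ≤ 0 → A < 0) {a b : ℝ} (ha : 0 < a) (hab : a ≤ b) :
    ∃! t, t ∈ Icc a b ∧ ∀ t' ∈ Icc a b, A * t ^ 2 + B * t ^ 3 ≤ A * t' ^ 2 + B * t' ^ 3 :=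
  existsUnique_min_Icc_of_midpoint_lt hab (by fun_prop) fun s hs _ _ hst heq =>
    cubic_midpoint_lt hAB (ha.trans_le hs.1) hst heq

lemma cubic_lt_of_tangent (hB : 0 < B) {τ t : ℝ} (hτ : 0 < τ) (htan : 2 * A + 3 * B * τ = 0)
    (ht : 0 ≤ t) (hne : t ≠ τ) : A * τ ^ 2 + B * τ ^ 3 < A * t ^ 2 + B * t ^ 3 := by
  -- `f t - f τ = B (t - τ)² (t + τ / 2) + (2 A + 3 B τ) (t² - τ²) / 2`
  have hsq : 0 < (t - τ) ^ 2 := by have := sub_ne_zero.2 hne; positivity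
  have : 0 < B * (t - τ) ^ 2 * (t + τ / 2) := by positivity
  linear_combination this - (t ^ 2 - τ ^ 2) / 2 * htan

end Cubic

section Pencil

/-! The coefficients `(c2 + η q2, c3 + η q3)` of the functionals `c + η • q`, where
`q2 = r q3` with `r > 0` and `c2 < r c3`. -/

variable {c2 c3 q2 q3 r : ℝ}

lemma pencil_neg_of_nonpos (hqr : q2 = r * q3) (hr : 0 < r) (hcr : c2 < r * c3) (η : ℝ)
    (hB : c3 + η * q3 ≤ 0) : c2 + η * q2 < 0 := by
  rw [hqr]
  nlinarith [mul_nonpos_of_nonneg_of_nonpos hr.le hB]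

lemma exists_tangent_pencil (hq3 : q3 ≠ 0) (hqr : q2 = r * q3) (hr : 0 < r) (hcr : c2 < r * c3)
    {τ : ℝ} (hτ : 0 < τ) :
    ∃ η, 0 < c3 + η * q3 ∧ 2 * (c2 + η * q2) + 3 * (c3 + η * q3) * τ = 0 := by
  have hden : 2 * q2 + 3 * q3 * τ ≠ 0 := by
    rw [show 2 * q2 + 3 * q3 * τ = q3 * (2 * r + 3 * τ) by rw [hqr]; ring]
    exact mul_ne_zero hq3 (by positivity)
  set η := -(2 * c2 + 3 * c3 * τ) / (2 * q2 + 3 * q3 * τ)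
  have htan : 2 * (c2 + η * q2) + 3 * (c3 + η * q3) * τ = 0 := by
    linear_combination div_mul_cancel₀ (-(2 * c2 + 3 * c3 * τ)) hden
  refine ⟨η, ?_, htan⟩
  by_contra! hB
  nlinarith [pencil_neg_of_nonpos hqr hr hcr η hB]

end Pencil

def twistedCubic (t : ℝ) : Fin 3 → ℝ := ![t, t ^ 2, t ^ 3]

lemma dotProduct_twistedCubic (v : Fin 3 → ℝ) (t : ℝ) :
    v ⬝ᵥ twistedCubic t = v 0 * t + v 1 * t ^ 2 + v 2 * t ^ 3 := by
  simp [dotProduct, Fin.sum_univ_three, twistedCubic]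

theorem stmt_9
    (a1 a2 : ℝ) (ha1 : 0 < a1) (ha : a1 ≤ a2)
    (φ : ℝ → Fin 3 → ℝ) (hφ : φ = fun t => ![t, t ^ 2, t ^ 3])
    (c2 c3 q2 q3 : ℝ)
    (c q : Fin 3 → ℝ) (hc : c = ![0, c2, c3]) (hq : q = ![0, q2, q3])
    (hq3 : q3 ≠ 0)
    (h1 : -(q2 / q3) < 0)
    (h2 : c2 - c3 * (q2 / q3) < 0) :
    (∀ η : ℝ, ∃! m0 : Fin 3 → ℝ, m0 ∈ φ '' Set.Icc a1 a2 ∧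
      ∀ m' ∈ φ '' Set.Icc a1 a2, (c + η • q) ⬝ᵥ m0 ≤ (c + η • q) ⬝ᵥ m') ∧
    ∀ ξ : ℝ,
      ({mm ∈ convexHull ℝ (φ '' Set.Icc a1 a2) | q ⬝ᵥ mm = ξ}).Nonempty →
      ∀ m0 ∈ {mm ∈ convexHull ℝ (φ '' Set.Icc a1 a2) | q ⬝ᵥ mm = ξ},
        (∀ m' ∈ {mm ∈ convexHull ℝ (φ '' Set.Icc a1 a2) | q ⬝ᵥ mm = ξ},
          c ⬝ᵥ m0 ≤ c ⬝ᵥ m') →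
        m0 ∈ φ '' Set.Icc a1 a2 := by
  obtain rfl : φ = twistedCubic := hφ
  have hr : 0 < q2 / q3 := neg_neg_iff_pos.1 h1
  have hqr : q2 = q2 / q3 * q3 := (div_mul_cancel₀ q2 hq3).symm
  have hcr : c2 < q2 / q3 * c3 := by linarith
  have hdot (η t : ℝ) :
      (c + η • q) ⬝ᵥ twistedCubic t = (c2 + η * q2) * t ^ 2 + (c3 + η * q3) * t ^ 3 := by
    rw [dotProduct_twistedCubic]
    simp [hc, hq]
  refine ⟨fun η => existsUnique_min_image ?_, fun ξ _ m0 hm0 hmin => ?_⟩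
  · simpa only [hdot] using
      existsUnique_min_cubic (pencil_neg_of_nonpos hqr hr hcr η) ha1 ha
  obtain ⟨τ, hτ, hτq⟩ := exists_apply_eq_of_mem_convexHull_image (dotProductBilin ℝ ℝ q)
    isPreconnected_Icc (by simp [Function.comp_def, dotProduct_twistedCubic]; fun_prop) hm0.1
  obtain ⟨η, hB, htan⟩ := exists_tangent_pencil hq3 hqr hr hcr (ha1.trans_le hτ.1)
  have hstrict : ∀ m ∈ twistedCubic '' Icc a1 a2, m ≠ twistedCubic τ →
      (c + η • q) ⬝ᵥ twistedCubic τ < (c + η • q) ⬝ᵥ m := by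
    rintro _ ⟨t, ht, rfl⟩ hne
    rw [hdot, hdot]
    exact cubic_lt_of_tangent hB (ha1.trans_le hτ.1) htan (by linarith [ht.1])
      (by rintro rfl; exact hne rfl)
  have hmem : twistedCubic τ ∈ twistedCubic '' Icc a1 a2 := mem_image_of_mem _ hτ
  rw [eq_of_mem_convexHull_of_le_of_eq (ℓ := dotProductBilin ℝ ℝ c) (μ := dotProductBilin ℝ ℝ q)
    (by simpa [add_dotProduct] using hstrict) hm0.1 hτq.symm
    (hmin _ ⟨subset_convexHull ℝ _ hmem, hτq.trans hm0.2⟩)]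
  exact hmem
end

section
/- Let a_1 ≤ a_2 < 0, K = [a_1,a_2], φ(t) = (t, t², t³), L = φ(K) ⊆ ℝ³, and Λ = convexHull(L). Let c = (0, c_2, c_3) and q = (0, q_2, q_3) in ℝ³ with q_3 ≠ 0, −q_2/q_3 > 0, and c_2 − c_3·(q_2/q_3) < 0. Then for every ξ ∈ ℝ such that the set S_ξ = {m ∈ Λ : q·m = ξ} is nonempty, every point of S_ξ at which m ↦ c·m attains its minimum over S_ξ belongs to L. -/
/-!
Write `x = m 1`, `y = m 2` and `r = -q₂/q₃ > 0`. On the slice `q ⬝ᵥ m = ξ`, `c ⬝ᵥ m` is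
`(c₂ - c₃ q₂/q₃) x` plus a constant. So a minimiser maximises `x` among the points of `Λ` that
have the same value of `y - r x`.

For `t ≤ 0` we have `t³ = -(t²)^{3/2}`, so Jensen's inequality for the strictly convex function
`x ↦ x^{3/2}` gives `y ≤ -x^{3/2}` on `Λ`, with equality only on `L`. If a point of `Λ` lies
strictly below this graph then, since `y - r x ≥ a₁³ - r a₁²` on `Λ`, the intermediate value
theorem yields `t ∈ [a₁, -√x)` with `t³ - r t² = y - r x`: a point of `L` on the same slice with
the larger first coordinate `t² > x`.
-/

open Set

def momentCurve (t : ℝ) : Fin 3 → ℝ := ![t, t ^ 2, t ^ 3]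

@[simp] lemma momentCurve_one (t : ℝ) : momentCurve t 1 = t ^ 2 := rfl
@[simp] lemma momentCurve_two (t : ℝ) : momentCurve t 2 = t ^ 3 := rfl

lemma sq_rpow_three_halves_of_nonpos {t : ℝ} (ht : t ≤ 0) : (t ^ 2) ^ (3 / 2 : ℝ) = -t ^ 3 := by
  rw [← neg_sq, ← Real.rpow_natCast_mul (by linarith)]
  norm_num
  ring

lemma lt_or_mem_of_mem_convexHull_momentCurve {s : Set ℝ} (hs : s ⊆ Iic 0) {m : Fin 3 → ℝ}
    (hm : m ∈ convexHull ℝ (momentCurve '' s)) :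
    m 2 < -m 1 ^ (3 / 2 : ℝ) ∨ m ∈ momentCurve '' s := by
  obtain ⟨ι, _, w, z, hw₀, hw₁, hz, rfl⟩ := mem_convexHull_iff_exists_fintype.1 hm
  choose τ hτs hτ using hz
  simp only [← hτ]
  have hτ0 (i : ι) : τ i ≤ 0 := hs (hτs i)
  have hconv := strictConvexOn_rpow (by norm_num : (1 : ℝ) < 3 / 2)
  have hmem (i) (_ : i ∈ Finset.univ) : τ i ^ 2 ∈ Ici (0 : ℝ) := mem_Ici.2 (sq_nonneg _)
  have hcoord (j : Fin 3) : (∑ i, w i • momentCurve (τ i)) j = ∑ i, w i • momentCurve (τ i) j :=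
    Finset.sum_apply ..
  have hjensen := (hconv.map_sum_eq_iff' (fun i _ ↦ hw₀ i) hw₁ hmem).1
  have hle := hconv.convexOn.map_sum_le (fun i _ ↦ hw₀ i) hw₁ hmem
  simp only [hcoord, momentCurve_one, momentCurve_two]
  simp only [sq_rpow_three_halves_of_nonpos (hτ0 _), smul_eq_mul, mul_neg,
    Finset.sum_neg_distrib] at hle hjensen ⊢
  rcases hle.lt_or_eq with hlt | heq
  · exact .inl (by linarith)
  obtain ⟨j, -, hj⟩ := Finset.exists_ne_zero_of_sum_ne_zero (hw₁ ▸ one_ne_zero)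
  have hτj (i : ι) (hi : w i ≠ 0) : τ i = τ j := by
    have := (hjensen heq i (Finset.mem_univ _) hi).trans (hjensen heq j (Finset.mem_univ _) hj).symm
    nlinarith [hτ0 i, hτ0 j]
  refine .inr ⟨τ j, hτs j, ?_⟩
  calc momentCurve (τ j) = ∑ i, w i • momentCurve (τ j) := by
        rw [← Finset.sum_smul, hw₁, one_smul]
    _ = ∑ i, w i • momentCurve (τ i) := Finset.sum_congr rfl fun i _ ↦ by
      rcases eq_or_ne (w i) 0 with hi | hi
      · simp [hi]
      · rw [hτj i hi]

lemma sq_mem_Icc_of_mem_convexHull_momentCurve {a₁ a₂ : ℝ} (ha₂ : a₂ ≤ 0) {m : Fin 3 → ℝ}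
    (hm : m ∈ convexHull ℝ (momentCurve '' Icc a₁ a₂)) : m 1 ∈ Icc (a₂ ^ 2) (a₁ ^ 2) := by
  refine convexHull_min (t := (fun m : Fin 3 → ℝ ↦ m 1) ⁻¹' Icc (a₂ ^ 2) (a₁ ^ 2)) ?_
    ((convex_Icc _ _).is_linear_preimage (LinearMap.proj 1).isLinear) hm
  rintro _ ⟨t, ⟨h₁, h₂⟩, rfl⟩
  constructor <;> simp only [momentCurve_one] <;> nlinarith

lemma le_sub_of_mem_convexHull_momentCurve {a₁ a₂ r : ℝ} (ha₂ : a₂ ≤ 0) (hr : 0 ≤ r)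
    {m : Fin 3 → ℝ} (hm : m ∈ convexHull ℝ (momentCurve '' Icc a₁ a₂)) :
    a₁ ^ 3 - r * a₁ ^ 2 ≤ m 2 - r * m 1 := by
  refine convexHull_min (t := {m : Fin 3 → ℝ | a₁ ^ 3 - r * a₁ ^ 2 ≤ m 2 - r * m 1}) ?_
    (convex_halfSpace_ge ⟨fun _ _ ↦ by simp only [Pi.add_apply]; ring,
      fun _ _ ↦ by simp only [Pi.smul_apply, smul_eq_mul]; ring⟩ _) hm
  rintro _ ⟨t, ⟨h₁, h₂⟩, rfl⟩
  change a₁ ^ 3 - r * a₁ ^ 2 ≤ t ^ 3 - r * t ^ 2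
  nlinarith [mul_nonneg (sub_nonneg.2 h₁) (sq_nonneg (t + a₁)),
    mul_nonneg hr (mul_nonneg (sub_nonneg.2 h₁) (by linarith : 0 ≤ -(t + a₁)))]

lemma exists_sq_gt_of_lt_neg_rpow {a₁ r x y : ℝ} (ha₁ : a₁ ≤ 0) (hx₀ : 0 ≤ x) (hx : x ≤ a₁ ^ 2)
    (hlow : a₁ ^ 3 - r * a₁ ^ 2 ≤ y - r * x) (hy : y < -x ^ (3 / 2 : ℝ)) :
    ∃ t ∈ Icc a₁ (-√x), x < t ^ 2 ∧ t ^ 3 - r * t ^ 2 = y - r * x := by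
  have hsq : (-√x) ^ 2 = x := by rw [neg_sq, Real.sq_sqrt hx₀]
  have hcube : (-√x) ^ 3 = -x ^ (3 / 2 : ℝ) := by
    rw [← hsq, sq_rpow_three_halves_of_nonpos (by simp), neg_neg, hsq]
  have hle : a₁ ≤ -√x := le_neg_of_le_neg (Real.sqrt_le_iff.2 ⟨by linarith, by rwa [neg_sq]⟩)
  obtain ⟨t, ht, hft⟩ := intermediate_value_Icc hle (f := fun t ↦ t ^ 3 - r * t ^ 2)
    (by fun_prop) ⟨hlow, by simp only [hsq, hcube]; linarith⟩
  refine ⟨t, ht, ?_, hft⟩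
  have hlt : t < -√x := ht.2.lt_of_ne fun h ↦ by subst h; simp only [hsq, hcube] at hft; linarith
  nlinarith [Real.sqrt_nonneg x, Real.sq_sqrt hx₀]

lemma exists_momentCurve_beyond_of_notMem {a₁ a₂ r : ℝ} (ha : a₁ ≤ a₂) (ha₂ : a₂ ≤ 0)
    (hr : 0 ≤ r) {m : Fin 3 → ℝ} (hm : m ∈ convexHull ℝ (momentCurve '' Icc a₁ a₂))
    (hmL : m ∉ momentCurve '' Icc a₁ a₂) :
    ∃ t ∈ Icc a₁ a₂, m 1 < t ^ 2 ∧ t ^ 3 - r * t ^ 2 = m 2 - r * m 1 := by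
  have hbelow := (lt_or_mem_of_mem_convexHull_momentCurve (fun _ ht ↦ ht.2.trans ha₂) hm
    ).resolve_right hmL
  obtain ⟨hx₂, hx₁⟩ := sq_mem_Icc_of_mem_convexHull_momentCurve ha₂ hm
  obtain ⟨t, ht, hgt, hline⟩ := exists_sq_gt_of_lt_neg_rpow (ha.trans ha₂)
    ((sq_nonneg a₂).trans hx₂) hx₁ (le_sub_of_mem_convexHull_momentCurve ha₂ hr hm) hbelow
  refine ⟨t, ⟨ht.1, ht.2.trans ?_⟩, hgt, hline⟩
  exact neg_le.1 (Real.le_sqrt_of_sq_le (by rwa [neg_sq]))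

theorem stmt_10
    (a1 a2 : ℝ) (ha : a1 ≤ a2) (ha2 : a2 < 0)
    (φ : ℝ → Fin 3 → ℝ) (hφ : φ = fun t => ![t, t ^ 2, t ^ 3])
    (c2 c3 q2 q3 : ℝ)
    (c q : Fin 3 → ℝ) (hc : c = ![0, c2, c3]) (hq : q = ![0, q2, q3])
    (hq3 : q3 ≠ 0)
    (h1 : 0 < -(q2 / q3))
    (h2 : c2 - c3 * (q2 / q3) < 0) :
    ∀ ξ : ℝ,
      ({mm ∈ convexHull ℝ (φ '' Set.Icc a1 a2) | q ⬝ᵥ mm = ξ}).Nonempty →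
      ∀ m0 ∈ {mm ∈ convexHull ℝ (φ '' Set.Icc a1 a2) | q ⬝ᵥ mm = ξ},
        (∀ m' ∈ {mm ∈ convexHull ℝ (φ '' Set.Icc a1 a2) | q ⬝ᵥ mm = ξ},
          c ⬝ᵥ m0 ≤ c ⬝ᵥ m') →
        m0 ∈ φ '' Set.Icc a1 a2 := by
  intro ξ _ m₀ ⟨hm₀, hq₀⟩ hmin
  obtain rfl : φ = momentCurve := hφ
  subst hc hq
  have hdot (u v : ℝ) (m : Fin 3 → ℝ) : ![0, u, v] ⬝ᵥ m = u * m 1 + v * m 2 := by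
    simp [dotProduct, Fin.sum_univ_three]
  have hq₃ : q3 * (q2 / q3) = q2 := mul_div_cancel₀ q2 hq3
  by_contra hm₀L
  obtain ⟨t, ht, hgt, hline⟩ := exists_momentCurve_beyond_of_notMem ha ha2.le h1.le hm₀ hm₀L
  have hslice : ![0, q2, q3] ⬝ᵥ momentCurve t = ξ := by
    rw [← hq₀, hdot, hdot, momentCurve_one, momentCurve_two]
    linear_combination q3 * hline - (t ^ 2 - m₀ 1) * hq₃
  have hle := hmin _ ⟨subset_convexHull ℝ _ (mem_image_of_mem _ ht), hslice⟩
  rw [hdot, hdot, momentCurve_one, momentCurve_two] at hle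
  have hgain : c2 * t ^ 2 + c3 * t ^ 3 - (c2 * m₀ 1 + c3 * m₀ 2) =
      (c2 - c3 * (q2 / q3)) * (t ^ 2 - m₀ 1) := by
    linear_combination c3 * hline
  linarith [mul_neg_of_neg_of_pos h2 (sub_pos.2 hgt)]
end

section
/- Let 0 < a_1 ≤ a_2, K = [a_1,a_2], and φ(t) = (t, t², t³). For t ∈ K define N(t) = (−9t³ − 2t, 1 − 9t⁴, 6t³ + 3t) ∈ ℝ³ (a positive multiple of the principal normal vector to the curve φ at t). Then for every t ∈ K and every s ∈ K with s ≠ t, one has (φ(s) − φ(t)) · N(t) > 0. -/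
open Matrix

theorem stmt_11
    (a1 a2 : ℝ) (ha1 : 0 < a1) (ha : a1 ≤ a2)
    (φ : ℝ → Fin 3 → ℝ) (hφ : φ = fun t => ![t, t ^ 2, t ^ 3])
    (Nv : ℝ → Fin 3 → ℝ)
    (hN : Nv = fun t => ![-9 * t ^ 3 - 2 * t, 1 - 9 * t ^ 4, 6 * t ^ 3 + 3 * t]) :
    ∀ t ∈ Set.Icc a1 a2, ∀ s ∈ Set.Icc a1 a2, s ≠ t →
      0 < (φ s - φ t) ⬝ᵥ Nv t := by
  subst hφ hN
  rintro t ⟨ht1, _⟩ s ⟨hs1, _⟩ hst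
  have ht : 0 < t := lt_of_lt_of_le ha1 ht1
  have hs : 0 < s := lt_of_lt_of_le ha1 hs1
  have hne : s - t ≠ 0 := sub_ne_zero.mpr hst
  have hd : (0:ℝ) < (s - t) ^ 2 := by positivity
  have hH : 0 < (6 * t ^ 3 + 3 * t) * (s + t) + 3 * t ^ 2 - 3 * t ^ 4 + 1 := by
    nlinarith [mul_pos (mul_pos ht ht) (mul_pos ht ht), mul_pos hs ht,
      mul_pos (mul_pos ht (mul_pos ht ht)) hs]
  have key := mul_pos hd hH
  simp only [dotProduct, Fin.sum_univ_three, Pi.sub_apply,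
    Matrix.cons_val_zero, Matrix.cons_val_one, Matrix.head_cons,
    Matrix.cons_val_two, Matrix.tail_cons]
  nlinarith [key]
end

section
/- Let 0 < a_1 ≤ a_2, K = [a_1,a_2], φ(t) = (t, t², t³), L = φ(K) ⊆ ℝ³, and Λ = convexHull(L). For t ∈ K define N(t) = (−9t³ − 2t, 1 − 9t⁴, 6t³ + 3t) ∈ ℝ³. Then for every t ∈ K and every v ∈ Λ with v ≠ φ(t), one has (v − φ(t)) · N(t) > 0. -/
open Matrix

theorem stmt_12
    (a1 a2 : ℝ) (ha1 : 0 < a1) (ha : a1 ≤ a2)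
    (φ : ℝ → Fin 3 → ℝ) (hφ : φ = fun t => ![t, t ^ 2, t ^ 3])
    (Nv : ℝ → Fin 3 → ℝ)
    (hN : Nv = fun t => ![-9 * t ^ 3 - 2 * t, 1 - 9 * t ^ 4, 6 * t ^ 3 + 3 * t]) :
    ∀ t ∈ Set.Icc a1 a2, ∀ v ∈ convexHull ℝ (φ '' Set.Icc a1 a2), v ≠ φ t →
      0 < (v - φ t) ⬝ᵥ Nv t := by
  intro t ht v hv hne
  set g : (Fin 3 → ℝ) → ℝ := fun w => (w - φ t) ⬝ᵥ Nv t with hg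
  have hgt : g (φ t) = 0 := by simp [hg]
  have hlin : ∀ (x y : Fin 3 → ℝ) (a b : ℝ), a + b = 1 →
      g (a • x + b • y) = a * g x + b * g y := by
    intro x y a b hab
    have h1 : a • x + b • y - φ t = a • (x - φ t) + b • (y - φ t) := by
      have : (a + b) • φ t = φ t := by rw [hab, one_smul]
      rw [smul_sub, smul_sub]
      rw [← this]
      have hb : b = 1 - a := by linarith
      rw [hb]
      module
    simp only [hg, h1, add_dotProduct, smul_dotProduct, smul_eq_mul]
  set C : Set (Fin 3 → ℝ) := {w | w = φ t ∨ 0 < g w} with hC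
  have hconv : Convex ℝ C := by
    intro x hx y hy a b hA hB hab
    rcases hx with hx | hx <;> rcases hy with hy | hy
    · left
      rw [hx, hy, Convex.combo_self hab]
    · rcases eq_or_lt_of_le hB with hb0 | hb0
      · left
        have ha1' : a = 1 := by linarith
        rw [ha1', ← hb0, one_smul, zero_smul, add_zero, hx]
      · right
        have : g (a • x + b • y) = a * g x + b * g y := hlin x y a b hab
        rw [this, hx, hgt, mul_zero, zero_add]
        exact mul_pos hb0 hy
    · rcases eq_or_lt_of_le hA with ha0 | ha0
      · left
        have hb1' : b = 1 := by linarith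
        rw [hb1', ← ha0, one_smul, zero_smul, zero_add, hy]
      · right
        have : g (a • x + b • y) = a * g x + b * g y := hlin x y a b hab
        rw [this, hy, hgt, mul_zero, add_zero]
        exact mul_pos ha0 hx
    · right
      have : g (a • x + b • y) = a * g x + b * g y := hlin x y a b hab
      rw [this]
      rcases eq_or_lt_of_le hA with h0 | h0
      · have hb1 : b = 1 := by linarith
        nlinarith
      · nlinarith [mul_pos h0 hx, mul_nonneg hB hy.le]
  have hsub : φ '' Set.Icc a1 a2 ⊆ C := by
    rintro _ ⟨s, hs, rfl⟩
    by_cases hst : s = t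
    · left; rw [hst]
    · right
      have hs0 : 0 < s := lt_of_lt_of_le ha1 hs.1
      have ht0 : 0 < t := lt_of_lt_of_le ha1 ht.1
      have hgval : g (φ s) = (s - t) ^ 2 * ((6 * t ^ 3 + 3 * t) * s + 3 * t ^ 4 + 6 * t ^ 2 + 1) := by
        simp only [hg, hφ, hN]
        simp [dotProduct, Fin.sum_univ_three]
        ring
      rw [hgval]
      have h1 : 0 < (s - t) ^ 2 := by
        have hne' : s - t ≠ 0 := sub_ne_zero.mpr hst
        positivity
      have h2 : 0 < (6 * t ^ 3 + 3 * t) * s + 3 * t ^ 4 + 6 * t ^ 2 + 1 := by positivity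
      exact mul_pos h1 h2
  have hCin : v ∈ C := convexHull_min hsub hconv hv
  rcases hCin with h | h
  · exact absurd h hne
  · exact h
end

section
/- Let a_1 ≤ a_2, K = [a_1,a_2], φ(t) = (t, t², t³), L = φ(K) ⊆ ℝ³, and Λ = convexHull(L). Let c, q ∈ ℝ³ and suppose there exists ε ∈ {+1,−1} such that for all t, s ∈ K with s ≠ t, ε · (φ′(t) × (c × q)) · (φ(s) − φ(t)) > 0, where × denotes the cross product in ℝ³ and φ′(t) = (1, 2t, 3t²). Then for every t ∈ K and every v ∈ Λ with v ≠ φ(t) and q·(v − φ(t)) = 0, one has c·(v − φ(t)) ≠ 0. -/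
open Matrix

/-!
By the vector triple product expansion, `φ' t ⨯₃ (c ⨯₃ q)` is a combination of `c` and `q`, hence
orthogonal to `v - φ t`. On the other hand, the sign hypothesis says that the linear functional
`x ↦ ε (φ' t ⨯₃ (c ⨯₃ q)) ⬝ᵥ (x - φ t)` is positive on the curve away from `φ t`. An open
half-space with one point of its boundary adjoined is convex, so it contains the convex hull of
the curve, and `v ≠ φ t` then forces the functional to be positive at `v`, a contradiction.
-/

section ConvexHull

variable {𝕜 E : Type*} [Field 𝕜] [LinearOrder 𝕜] [IsStrictOrderedRing 𝕜]
  [AddCommGroup E] [Module 𝕜 E]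

lemma convex_setOf_eq_or_pos_sub (f : E →ₗ[𝕜] 𝕜) (p : E) :
    Convex 𝕜 {x | x = p ∨ 0 < f (x - p)} := by
  refine convex_iff_forall_pos.2 fun x hx y hy a b ha hb hab => ?_
  have hcomb : a • x + b • y - p = a • (x - p) + b • (y - p) := by
    nth_rewrite 1 [← one_smul 𝕜 p]
    rw [← hab, add_smul, smul_sub, smul_sub]
    abel
  have hnonneg : ∀ z ∈ {x | x = p ∨ 0 < f (x - p)}, 0 ≤ f (z - p) := by
    rintro z (hz | hz)
    · simp [hz]
    · exact hz.le
  by_cases hxy : x = p ∧ y = p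
  · left
    rw [hxy.1, hxy.2, Convex.combo_self hab]
  · right
    rw [hcomb, map_add, map_smul, map_smul, smul_eq_mul, smul_eq_mul]
    rcases not_and_or.1 hxy with hx' | hy'
    · exact add_pos_of_pos_of_nonneg (mul_pos ha (hx.resolve_left hx'))
        (mul_nonneg hb.le (hnonneg y hy))
    · exact add_pos_of_nonneg_of_pos (mul_nonneg ha.le (hnonneg x hx))
        (mul_pos hb (hy.resolve_left hy'))

lemma convexHull_subset_setOf_eq_or_pos_sub (f : E →ₗ[𝕜] 𝕜) {s : Set E} {p : E}
    (hs : s ⊆ {x | x = p ∨ 0 < f (x - p)}) :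
    convexHull 𝕜 s ⊆ {x | x = p ∨ 0 < f (x - p)} :=
  convexHull_min hs (convex_setOf_eq_or_pos_sub f p)

end ConvexHull

lemma cross_cross_dotProduct_eq_zero {R : Type*} [CommRing R] (u v w x : Fin 3 → R)
    (hv : v ⬝ᵥ x = 0) (hw : w ⬝ᵥ x = 0) : u ⨯₃ (v ⨯₃ w) ⬝ᵥ x = 0 := by
  rw [cross_cross_eq_smul_sub_smul', sub_dotProduct, smul_dotProduct, smul_dotProduct, hv, hw,
    smul_zero, smul_zero, sub_zero]

theorem stmt_13_general
    (a1 a2 : ℝ)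
    (φ φ' : ℝ → Fin 3 → ℝ)
    (c q : Fin 3 → ℝ)
    (hsign : ∃ ε : ℝ, (ε = 1 ∨ ε = -1) ∧
      ∀ t ∈ Set.Icc a1 a2, ∀ s ∈ Set.Icc a1 a2, s ≠ t →
        0 < ε * ((φ' t ⨯₃ (c ⨯₃ q)) ⬝ᵥ (φ s - φ t))) :
    ∀ t ∈ Set.Icc a1 a2, ∀ v ∈ convexHull ℝ (φ '' Set.Icc a1 a2),
      v ≠ φ t → q ⬝ᵥ (v - φ t) = 0 → c ⬝ᵥ (v - φ t) ≠ 0 := by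
  obtain ⟨ε, -, hpos⟩ := hsign
  intro t ht v hv hne hq hc
  let f : (Fin 3 → ℝ) →ₗ[ℝ] ℝ := ε • dotProductBilin ℝ ℝ (φ' t ⨯₃ (c ⨯₃ q))
  have hcurve : φ '' Set.Icc a1 a2 ⊆ {x | x = φ t ∨ 0 < f (x - φ t)} := by
    rintro _ ⟨s, hs, rfl⟩
    rcases eq_or_ne s t with rfl | hst
    · exact Or.inl rfl
    · exact Or.inr (hpos t ht s hs hst)
  rcases convexHull_subset_setOf_eq_or_pos_sub f hcurve hv with hv | hv
  · exact hne hv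
  · have hvanish : f (v - φ t) = 0 := by
      simp [f, cross_cross_dotProduct_eq_zero _ _ _ _ hc hq]
    exact hv.ne' hvanish

theorem stmt_13
    (a1 a2 : ℝ) (ha : a1 ≤ a2)
    (φ φ' : ℝ → Fin 3 → ℝ)
    (hφ : φ = fun t => ![t, t ^ 2, t ^ 3])
    (hφ' : φ' = fun t => ![1, 2 * t, 3 * t ^ 2])
    (c q : Fin 3 → ℝ)
    (hsign : ∃ ε : ℝ, (ε = 1 ∨ ε = -1) ∧
      ∀ t ∈ Set.Icc a1 a2, ∀ s ∈ Set.Icc a1 a2, s ≠ t →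
        0 < ε * ((φ' t ⨯₃ (c ⨯₃ q)) ⬝ᵥ (φ s - φ t))) :
    ∀ t ∈ Set.Icc a1 a2, ∀ v ∈ convexHull ℝ (φ '' Set.Icc a1 a2),
      v ≠ φ t → q ⬝ᵥ (v - φ t) = 0 → c ⬝ᵥ (v - φ t) ≠ 0 :=
  stmt_13_general a1 a2 φ φ' c q hsign
end

section
/- Let 0 < a_1 ≤ a_2, K = [a_1,a_2], φ(t) = (t, t², t³), L = φ(K) ⊆ ℝ³, and Λ = convexHull(L). Let c, q ∈ ℝ³ satisfy: (i) there exists ε ∈ {+1,−1} such that for all t, s ∈ K with s ≠ t, ε · (φ′(t) × (c × q)) · (φ(s) − φ(t)) > 0, where φ′(t) = (1, 2t, 3t²); (ii) if there is exactly one a ∈ K with (φ(a_1) + φ(a_2) − 2φ(a)) · q = 0, then that a satisfies (φ(a_1) + φ(a_2) − 2φ(a)) · c > 0. Then for every ξ ∈ ℝ such that the set S_ξ = {m ∈ Λ : q·m = ξ} is nonempty, every point of S_ξ at which m ↦ c·m attains its minimum over S_ξ belongs to L. -/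
/-! Since `φ' t ⨯₃ (c ⨯₃ q) = (φ' t ⬝ᵥ q) • c - (φ' t ⬝ᵥ c) • q`, hypothesis (i) says that the
plane curve `t ↦ (q ⬝ᵥ φ t, c ⬝ᵥ φ t)` lies strictly on one side of each of its tangent lines;
in particular every `φ t` is an exposed point of `Λ`, cut out by a functional of `q ⬝ᵥ m` and
`c ⬝ᵥ m` alone. So if a minimiser `m₀` of `c` on the slice `q ⬝ᵥ m = ξ` is not on `L`, the point
`(ξ, c ⬝ᵥ m₀)` is a lowest point of the projected hull that is not on the curve. A supporting
line `c + α q` there touches the curve at two parameters at least; at an interior touching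
parameter the line would be tangent, which (i) forbids, so it touches exactly at `a₁` and `a₂`.
The chord then lies below the curve: `(φ a₁ + φ a₂ - 2 φ a) ⬝ᵥ c ≤ 0` whenever
`(φ a₁ + φ a₂ - 2 φ a) ⬝ᵥ q = 0`. By (i) this forces `ε (φ' a ⬝ᵥ q) < 0` at every such `a`, so
there is exactly one of them (of two, each would lie strictly below the other), contradicting (ii).
-/

open Matrix Set

theorem exists_forall_le_add_mul_sub {ι : Type*} {s : Set ι} {X Y : ι → ℝ} {ξ η : ℝ}
    (hlt : ∃ u ∈ s, X u < ξ) (hgt : ∃ v ∈ s, ξ < X v)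
    (hchord : ∀ u ∈ s, ∀ v ∈ s, X u < ξ → ξ < X v →
      (η - Y u) * (X v - ξ) ≤ (η - Y v) * (X u - ξ))
    (hlevel : ∀ t ∈ s, X t = ξ → η ≤ Y t) :
    ∃ α, ∀ t ∈ s, η ≤ Y t + α * (X t - ξ) := by
  set slope := fun t => (η - Y t) / (X t - ξ)
  obtain ⟨u, hu, hXu⟩ := hlt
  obtain ⟨v, hv, hXv⟩ := hgt
  obtain ⟨α, hright, hleft⟩ := exists_between_of_forall_le
    (s := slope '' {v ∈ s | ξ < X v}) (t := slope '' {u ∈ s | X u < ξ})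
    ⟨_, mem_image_of_mem _ ⟨hv, hXv⟩⟩ ⟨_, mem_image_of_mem _ ⟨hu, hXu⟩⟩ <| by
      rintro _ ⟨v, ⟨hv, hXv⟩, rfl⟩ _ ⟨u, ⟨hu, hXu⟩, rfl⟩
      rw [div_le_iff₀ (sub_pos.2 hXv), div_mul_eq_mul_div, le_div_iff_of_neg (sub_neg.2 hXu)]
      linarith [hchord u hu v hv hXu hXv]
  refine ⟨α, fun t ht => ?_⟩
  rcases lt_trichotomy (X t) ξ with h | h | h
  · have := hleft (mem_image_of_mem slope ⟨ht, h⟩)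
    rw [le_div_iff_of_neg (sub_neg.2 h)] at this
    linarith
  · simp [h, hlevel t ht h]
  · have := hright (mem_image_of_mem slope ⟨ht, h⟩)
    rw [div_le_iff₀ (sub_pos.2 h)] at this
    linarith

section ConvexHull

variable {E : Type*} [AddCommGroup E] [Module ℝ E] {S : Set E} {m : E}

theorem mem_convexHull_sep_eq_of_forall_le {ℓ : E →ₗ[ℝ] ℝ} {r : ℝ} (hS : ∀ x ∈ S, r ≤ ℓ x)
    (hm : m ∈ convexHull ℝ S) (hℓm : ℓ m = r) : m ∈ convexHull ℝ {x ∈ S | ℓ x = r} := by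
  classical
  obtain ⟨ι, t, w, z, hw₀, hw₁, hz, rfl⟩ := (convexHull_eq S).subset hm
  have hgap : ∑ i ∈ t, w i * (ℓ (z i) - r) = 0 := by
    simp only [mul_sub, Finset.sum_sub_distrib, ← Finset.sum_mul, hw₁, one_mul]
    rw [← hℓm, Finset.centerMass_eq_of_sum_1 _ _ hw₁, map_sum]
    simp
  have hcontact : ∀ i ∈ t, w i ≠ 0 → ℓ (z i) = r := fun i hi hwi => by
    have := (Finset.sum_eq_zero_iff_of_nonneg fun j hj =>
      mul_nonneg (hw₀ j hj) (sub_nonneg.2 (hS _ (hz j hj)))).1 hgap i hi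
    simpa [sub_eq_zero, hwi] using this
  rw [← Finset.centerMass_filter_ne_zero]
  refine Finset.centerMass_mem_convexHull _ (fun i hi => hw₀ i (Finset.mem_filter.1 hi).1) ?_
    fun i hi => ?_
  · rw [Finset.sum_filter_ne_zero, hw₁]; exact one_pos
  · obtain ⟨hi, hwi⟩ := Finset.mem_filter.1 hi
    exact ⟨hz i hi, hcontact i hi hwi⟩

theorem lt_of_mem_convexHull_of_forall_lt {ℓ : E →ₗ[ℝ] ℝ} {p : E}
    (hS : ∀ x ∈ S, x ≠ p → ℓ p < ℓ x) (hm : m ∈ convexHull ℝ S) (hmp : m ≠ p) : ℓ p < ℓ m := by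
  have hS' : ∀ x ∈ S, ℓ p ≤ ℓ x := fun x hx => by
    rcases eq_or_ne x p with rfl | hxp
    · exact le_rfl
    · exact (hS x hx hxp).le
  have hle : ℓ p ≤ ℓ m := convexHull_min hS' (convex_halfSpace_ge ℓ.isLinear _) hm
  refine hle.lt_of_ne fun h => hmp ?_
  have hface : {x ∈ S | ℓ x = ℓ p} ⊆ {p} := fun x ⟨hx, hxp⟩ => by
    by_contra hne
    exact (hS x hx hne).ne' hxp
  simpa using convexHull_mono hface (mem_convexHull_sep_eq_of_forall_le hS' hm h.symm)

theorem exists_lt_of_mem_convexHull {ℓ C : E →ₗ[ℝ] ℝ} {r : ℝ} (hm : m ∈ convexHull ℝ S)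
    (hℓm : ℓ m = r) (hC : ∀ x ∈ S, ℓ x = r → C m < C x) : ∃ x ∈ S, ℓ x < r := by
  by_contra! h
  have : C m < C m := convexHull_min (fun x hx => hC x hx.1 hx.2)
    (convex_halfSpace_gt C.isLinear _) (mem_convexHull_sep_eq_of_forall_le h hm hℓm)
  exact lt_irrefl _ this

theorem nontrivial_of_mem_convexHull_image {ι : Type*} {f : ι → E} {s : Set ι}
    {ℓ : E →ₗ[ℝ] ℝ} (hs : ∀ i ∈ s, ℓ m ≤ ℓ (f i)) (hm : m ∈ convexHull ℝ (f '' s))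
    (hms : m ∉ f '' s) : {i ∈ s | ℓ (f i) = ℓ m}.Nontrivial := by
  by_contra h
  have hsub : {x ∈ f '' s | ℓ x = ℓ m}.Subsingleton := by
    rintro _ ⟨⟨i, hi, rfl⟩, hfi⟩ _ ⟨⟨j, hj, rfl⟩, hfj⟩
    rw [not_nontrivial_iff.1 h ⟨hi, hfi⟩ ⟨hj, hfj⟩]
  have := mem_convexHull_sep_eq_of_forall_le (by simpa using hs) hm rfl
  exact hms ((hsub.convex (𝕜 := ℝ)).convexHull_eq ▸ this).1

theorem Convex.sub_mul_sub_le_of_forall_le_on_slice {Λ : Set E} (hΛ : Convex ℝ Λ)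
    {Q C : E →ₗ[ℝ] ℝ} {ξ η : ℝ} (hmin : ∀ m ∈ Λ, Q m = ξ → η ≤ C m) {x y : E} (hx : x ∈ Λ)
    (hy : y ∈ Λ) (hxξ : Q x < ξ) (hξy : ξ < Q y) :
    (η - C x) * (Q y - ξ) ≤ (η - C y) * (Q x - ξ) := by
  have hd : 0 < Q y - Q x := by linarith
  have hp := hmin _ (hΛ hx hy (div_nonneg (sub_pos.2 hξy).le hd.le)
    (div_nonneg (sub_pos.2 hxξ).le hd.le) (by field_simp; ring)) (by
      simp only [map_add, map_smul, smul_eq_mul]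
      field_simp
      ring)
  simp only [map_add, map_smul, smul_eq_mul] at hp
  rw [div_mul_eq_mul_div, div_mul_eq_mul_div, ← add_div, le_div_iff₀ hd] at hp
  linarith

theorem exists_forall_add_mul_le_of_forall_le_on_slice {Q C : E →ₗ[ℝ] ℝ} (hm : m ∈ convexHull ℝ S)
    (hmin : ∀ m' ∈ convexHull ℝ S, Q m' = Q m → C m ≤ C m')
    (hlevel : ∀ x ∈ S, Q x = Q m → C m < C x) :
    ∃ α : ℝ, ∀ x ∈ S, C m + α * Q m ≤ C x + α * Q x := by
  obtain ⟨α, hα⟩ := exists_forall_le_add_mul_sub (X := Q) (Y := C)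
    (exists_lt_of_mem_convexHull hm rfl hlevel)
    (by simpa using exists_lt_of_mem_convexHull (ℓ := -Q) hm rfl (by simpa using hlevel))
    (fun u hu v hv => (convex_convexHull ℝ S).sub_mul_sub_le_of_forall_le_on_slice hmin
      (subset_convexHull ℝ S hu) (subset_convexHull ℝ S hv))
    (fun x hx hQx => (hlevel x hx hQx).le)
  exact ⟨α, fun x hx => by linarith [hα x hx]⟩

end ConvexHull

theorem cross_cross_dotProduct {R : Type*} [CommRing R] (u c q v : Fin 3 → R) :
    (u ⨯₃ (c ⨯₃ q)) ⬝ᵥ v = (u ⬝ᵥ q) * (c ⬝ᵥ v) - (u ⬝ᵥ c) * (q ⬝ᵥ v) := by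
  rw [cross_cross_eq_smul_sub_smul', sub_dotProduct, smul_dotProduct, smul_dotProduct,
    smul_eq_mul, smul_eq_mul, dotProduct_comm c u]

theorem HasDerivAt.const_dotProduct {ι : Type*} [Fintype ι] {f : ℝ → ι → ℝ} {f' : ι → ℝ}
    {t : ℝ} (hf : HasDerivAt f f' t) (w : ι → ℝ) :
    HasDerivAt (fun s => w ⬝ᵥ f s) (w ⬝ᵥ f') t :=
  HasDerivAt.fun_sum fun i _ => (hasDerivAt_pi.1 hf i).const_mul (w i)

theorem hasDerivAt_twistedCubic (t : ℝ) :
    HasDerivAt (fun s => ![s, s ^ 2, s ^ 3]) ![1, 2 * t, 3 * t ^ 2] t := by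
  refine hasDerivAt_pi.2 fun i => ?_
  fin_cases i
  · simpa using hasDerivAt_id' t
  · simpa using hasDerivAt_pow 2 t
  · simpa using hasDerivAt_pow 3 t

theorem add_sub_two_smul_dotProduct (x y z v : Fin 3 → ℝ) :
    (x + y - 2 • z) ⬝ᵥ v = v ⬝ᵥ x + v ⬝ᵥ y - 2 * (v ⬝ᵥ z) := by
  rw [dotProduct_comm, dotProduct_sub, dotProduct_add, dotProduct_smul, nsmul_eq_mul,
    Nat.cast_ofNat]

section Curve

variable {φ φ' : ℝ → Fin 3 → ℝ} {c q : Fin 3 → ℝ} {ε : ℝ}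

theorem eq_of_mem_convexHull_of_dotProduct_eq {K : Set ℝ} {t : ℝ} {m : Fin 3 → ℝ}
    (hsign : ∀ s ∈ K, s ≠ t → 0 < ε * ((φ' t ⨯₃ (c ⨯₃ q)) ⬝ᵥ (φ s - φ t)))
    (hm : m ∈ convexHull ℝ (φ '' K)) (hq : q ⬝ᵥ m = q ⬝ᵥ φ t) (hc : c ⬝ᵥ m = c ⬝ᵥ φ t) :
    m = φ t := by
  by_contra hne
  have hexposed := lt_of_mem_convexHull_of_forall_lt
    (ℓ := dotProductBilin ℝ ℝ (ε • (φ' t ⨯₃ (c ⨯₃ q)))) ?_ hm hne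
  · rw [← sub_pos] at hexposed
    simp [cross_cross_dotProduct, hq, hc] at hexposed
  · rintro _ ⟨s, hs, rfl⟩ hst
    have := hsign s hs (ne_of_apply_ne φ hst)
    simp only [dotProductBilin_apply_apply, smul_dotProduct, smul_eq_mul]
    simp only [dotProduct_sub, mul_sub] at this
    linarith

theorem eq_of_isLocalMin_of_dotProduct_eq {α s t : ℝ} (hφ : HasDerivAt φ (φ' t) t)
    (hsign : s ≠ t → 0 < ε * ((φ' t ⨯₃ (c ⨯₃ q)) ⬝ᵥ (φ s - φ t)))
    (hmin : IsLocalMin (fun u => (c + α • q) ⬝ᵥ φ u) t)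
    (hs : (c + α • q) ⬝ᵥ φ s = (c + α • q) ⬝ᵥ φ t) : s = t := by
  by_contra hst
  have hder : (c + α • q) ⬝ᵥ φ' t = 0 := hmin.hasDerivAt_eq_zero (hφ.const_dotProduct _)
  have hflat : (φ' t ⨯₃ (c ⨯₃ q)) ⬝ᵥ (φ s - φ t) = 0 := by
    rw [cross_cross_dotProduct, dotProduct_comm (φ' t) c, dotProduct_comm (φ' t) q]
    simp only [add_dotProduct, smul_dotProduct, smul_eq_mul, dotProduct_sub] at hder hs ⊢
    linear_combination (q ⬝ᵥ φ' t) * hs - (q ⬝ᵥ φ s - q ⬝ᵥ φ t) * hder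
  simpa [hflat] using hsign hst

theorem eq_endpoints_of_isMinOn {a1 a2 α b1 b2 : ℝ}
    (hφ : ∀ t ∈ Icc a1 a2, HasDerivAt φ (φ' t) t)
    (hsign : ∀ t ∈ Icc a1 a2, ∀ s ∈ Icc a1 a2, s ≠ t →
      0 < ε * ((φ' t ⨯₃ (c ⨯₃ q)) ⬝ᵥ (φ s - φ t)))
    (hb1 : b1 ∈ Icc a1 a2) (hb2 : b2 ∈ Icc a1 a2) (h12 : b1 < b2)
    (hmin1 : IsMinOn (fun t => (c + α • q) ⬝ᵥ φ t) (Icc a1 a2) b1)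
    (hmin2 : IsMinOn (fun t => (c + α • q) ⬝ᵥ φ t) (Icc a1 a2) b2) :
    b1 = a1 ∧ b2 = a2 := by
  have interior : ∀ {t s}, t ∈ Ioo a1 a2 → s ∈ Icc a1 a2 →
      IsMinOn (fun t => (c + α • q) ⬝ᵥ φ t) (Icc a1 a2) t →
      (c + α • q) ⬝ᵥ φ s = (c + α • q) ⬝ᵥ φ t → s = t := fun ht hs hmin hst =>
    eq_of_isLocalMin_of_dotProduct_eq (hφ _ (Ioo_subset_Icc_self ht))
      (hsign _ (Ioo_subset_Icc_self ht) _ hs) (hmin.isLocalMin (Icc_mem_nhds ht.1 ht.2)) hst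
  have heq := le_antisymm (isMinOn_iff.1 hmin1 b2 hb2) (isMinOn_iff.1 hmin2 b1 hb1)
  constructor
  · by_contra h
    exact h12.ne' (interior ⟨lt_of_le_of_ne hb1.1 (Ne.symm h), h12.trans_le hb2.2⟩ hb2 hmin1
      heq.symm)
  · by_contra h
    exact h12.ne (interior ⟨hb1.1.trans_lt h12, lt_of_le_of_ne hb2.2 h⟩ hb1 hmin2 heq)

theorem mul_dotProduct_neg_of_chord {a1 a2 t : ℝ}
    (hsign : ∀ s ∈ Icc a1 a2, s ≠ t → 0 < ε * ((φ' t ⨯₃ (c ⨯₃ q)) ⬝ᵥ (φ s - φ t)))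
    (h12 : a1 < a2) (hq : (φ a1 + φ a2 - 2 • φ t) ⬝ᵥ q = 0)
    (hc : (φ a1 + φ a2 - 2 • φ t) ⬝ᵥ c ≤ 0) : ε * (φ' t ⬝ᵥ q) < 0 := by
  have hnonneg : ∀ s ∈ Icc a1 a2, 0 ≤ ε * ((φ' t ⨯₃ (c ⨯₃ q)) ⬝ᵥ (φ s - φ t)) := fun s hs => by
    rcases eq_or_ne s t with rfl | hst
    · simp
    · exact (hsign s hs hst).le
  have ha1 : a1 ∈ Icc a1 a2 := left_mem_Icc.2 h12.le
  have ha2 : a2 ∈ Icc a1 a2 := right_mem_Icc.2 h12.le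
  have hpos : 0 < ε * ((φ' t ⨯₃ (c ⨯₃ q)) ⬝ᵥ (φ a1 + φ a2 - 2 • φ t)) := by
    rw [show φ a1 + φ a2 - 2 • φ t = (φ a1 - φ t) + (φ a2 - φ t) by rw [two_smul]; abel,
      dotProduct_add, mul_add]
    rcases eq_or_ne a1 t with rfl | h1
    · linarith [hsign a2 ha2 h12.ne', hnonneg a1 ha1]
    · linarith [hsign a1 ha1 h1, hnonneg a2 ha2]
  rw [cross_cross_dotProduct, dotProduct_comm q, hq, mul_zero, sub_zero, dotProduct_comm c,
    ← mul_assoc] at hpos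
  exact neg_of_mul_pos_left hpos hc

theorem eq_of_dotProduct_eq_of_mul_neg {K : Set ℝ} {b b' : ℝ}
    (hsign : ∀ t ∈ K, ∀ s ∈ K, s ≠ t → 0 < ε * ((φ' t ⨯₃ (c ⨯₃ q)) ⬝ᵥ (φ s - φ t)))
    (hb : b ∈ K) (hb' : b' ∈ K) (hq : q ⬝ᵥ φ b = q ⬝ᵥ φ b')
    (hneg : ε * (φ' b ⬝ᵥ q) < 0) (hneg' : ε * (φ' b' ⬝ᵥ q) < 0) : b = b' := by
  by_contra h
  have h1 := hsign b hb b' hb' (Ne.symm h)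
  have h2 := hsign b' hb' b hb h
  rw [cross_cross_dotProduct, dotProduct_sub q, hq, sub_self, mul_zero, sub_zero,
    ← mul_assoc] at h1 h2
  have hc1 := neg_of_mul_pos_right h1 hneg.le
  have hc2 := neg_of_mul_pos_right h2 hneg'.le
  rw [dotProduct_sub] at hc1 hc2
  linarith

theorem exists_chord_dotProduct_pos {a1 a2 : ℝ}
    (hcont : ContinuousOn (fun t => q ⬝ᵥ φ t) (Icc a1 a2))
    (hsign : ∀ t ∈ Icc a1 a2, ∀ s ∈ Icc a1 a2, s ≠ t →
      0 < ε * ((φ' t ⨯₃ (c ⨯₃ q)) ⬝ᵥ (φ s - φ t)))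
    (huniq : ∀ a ∈ Icc a1 a2,
      ((φ a1 + φ a2 - 2 • φ a) ⬝ᵥ q = 0 ∧
        ∀ b ∈ Icc a1 a2, (φ a1 + φ a2 - 2 • φ b) ⬝ᵥ q = 0 → b = a) →
      0 < (φ a1 + φ a2 - 2 • φ a) ⬝ᵥ c)
    (h12 : a1 < a2) :
    ∃ t ∈ Icc a1 a2, (φ a1 + φ a2 - 2 • φ t) ⬝ᵥ q = 0 ∧ 0 < (φ a1 + φ a2 - 2 • φ t) ⬝ᵥ c := by
  set ξ := (q ⬝ᵥ φ a1 + q ⬝ᵥ φ a2) / 2 with hξ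
  have hmid : ∀ t, (φ a1 + φ a2 - 2 • φ t) ⬝ᵥ q = 0 ↔ q ⬝ᵥ φ t = ξ := fun t => by
    rw [add_sub_two_smul_dotProduct]
    constructor <;> intro h <;> linarith
  obtain ⟨b, hb, hqb⟩ : ∃ b ∈ Icc a1 a2, q ⬝ᵥ φ b = ξ := by
    rw [← uIcc_of_le h12.le] at hcont ⊢
    refine intermediate_value_uIcc hcont (mem_uIcc.2 ?_)
    rcases le_total (q ⬝ᵥ φ a1) (q ⬝ᵥ φ a2) with h | h
    · exact Or.inl ⟨by linarith, by linarith⟩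
    · exact Or.inr ⟨by linarith, by linarith⟩
  by_contra! hbelow
  have hneg : ∀ t ∈ Icc a1 a2, q ⬝ᵥ φ t = ξ → ε * (φ' t ⬝ᵥ q) < 0 := fun t ht hqt =>
    mul_dotProduct_neg_of_chord (hsign t ht) h12 ((hmid t).2 hqt)
      (hbelow t ht ((hmid t).2 hqt))
  refine (hbelow b hb ((hmid b).2 hqb)).not_gt (huniq b hb ⟨(hmid b).2 hqb, ?_⟩)
  intro t ht htq
  rw [hmid] at htq
  exact eq_of_dotProduct_eq_of_mul_neg hsign ht hb (htq.trans hqb.symm) (hneg t ht htq)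
    (hneg b hb hqb)

theorem mem_image_of_forall_le_on_slice {a1 a2 : ℝ} {m₀ : Fin 3 → ℝ}
    (hφ : ∀ t ∈ Icc a1 a2, HasDerivAt φ (φ' t) t)
    (hsign : ∀ t ∈ Icc a1 a2, ∀ s ∈ Icc a1 a2, s ≠ t →
      0 < ε * ((φ' t ⨯₃ (c ⨯₃ q)) ⬝ᵥ (φ s - φ t)))
    (huniq : ∀ a ∈ Icc a1 a2,
      ((φ a1 + φ a2 - 2 • φ a) ⬝ᵥ q = 0 ∧
        ∀ b ∈ Icc a1 a2, (φ a1 + φ a2 - 2 • φ b) ⬝ᵥ q = 0 → b = a) →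
      0 < (φ a1 + φ a2 - 2 • φ a) ⬝ᵥ c)
    (hm₀ : m₀ ∈ convexHull ℝ (φ '' Icc a1 a2))
    (hmin : ∀ m ∈ convexHull ℝ (φ '' Icc a1 a2), q ⬝ᵥ m = q ⬝ᵥ m₀ → c ⬝ᵥ m₀ ≤ c ⬝ᵥ m) :
    m₀ ∈ φ '' Icc a1 a2 := by
  by_contra hm₀L
  have hlevel : ∀ x ∈ φ '' Icc a1 a2, q ⬝ᵥ x = q ⬝ᵥ m₀ → c ⬝ᵥ m₀ < c ⬝ᵥ x := by
    rintro _ ⟨t, ht, rfl⟩ hq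
    refine (hmin _ (subset_convexHull ℝ _ ⟨t, ht, rfl⟩) hq).lt_of_ne fun hc => hm₀L ⟨t, ht, ?_⟩
    exact (eq_of_mem_convexHull_of_dotProduct_eq (hsign t ht) hm₀ hq.symm hc).symm
  obtain ⟨α, hα⟩ := exists_forall_add_mul_le_of_forall_le_on_slice
    (Q := dotProductBilin ℝ ℝ q) (C := dotProductBilin ℝ ℝ c) hm₀ hmin hlevel
  have hsupp : ∀ t ∈ Icc a1 a2, (c + α • q) ⬝ᵥ m₀ ≤ (c + α • q) ⬝ᵥ φ t := fun t ht => by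
    simpa [add_dotProduct] using hα _ ⟨t, ht, rfl⟩
  obtain ⟨b1, ⟨hb1, hψ1⟩, b2, ⟨hb2, hψ2⟩, h12⟩ :=
    (nontrivial_of_mem_convexHull_image (ℓ := dotProductBilin ℝ ℝ (c + α • q)) hsupp hm₀
      hm₀L).exists_lt
  simp only [dotProductBilin_apply_apply] at hψ1 hψ2
  have hmin_at : ∀ b, (c + α • q) ⬝ᵥ φ b = (c + α • q) ⬝ᵥ m₀ →
      IsMinOn (fun t => (c + α • q) ⬝ᵥ φ t) (Icc a1 a2) b := fun b hb =>
    isMinOn_iff.2 fun t ht => hb ▸ hsupp t ht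
  obtain ⟨rfl, rfl⟩ := eq_endpoints_of_isMinOn hφ hsign hb1 hb2 h12
    (hmin_at b1 hψ1) (hmin_at b2 hψ2)
  obtain ⟨t, ht, hq, hc⟩ := exists_chord_dotProduct_pos
    (fun t ht => ((hφ t ht).const_dotProduct q).continuousAt.continuousWithinAt) hsign huniq h12
  have hchord : (φ b1 + φ b2 - 2 • φ t) ⬝ᵥ (c + α • q) ≤ 0 := by
    rw [add_sub_two_smul_dotProduct]
    linarith [hsupp t ht]
  rw [dotProduct_add, dotProduct_smul, hq, smul_zero, add_zero] at hchord
  exact hchord.not_gt hc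

end Curve

theorem stmt_14_general
    (a1 a2 : ℝ)
    (φ φ' : ℝ → Fin 3 → ℝ)
    (hφ : φ = fun t => ![t, t ^ 2, t ^ 3])
    (hφ' : φ' = fun t => ![1, 2 * t, 3 * t ^ 2])
    (c q : Fin 3 → ℝ)
    (hsign : ∃ ε : ℝ, (ε = 1 ∨ ε = -1) ∧
      ∀ t ∈ Set.Icc a1 a2, ∀ s ∈ Set.Icc a1 a2, s ≠ t →
        0 < ε * ((φ' t ⨯₃ (c ⨯₃ q)) ⬝ᵥ (φ s - φ t)))
    (huniq : ∀ a ∈ Set.Icc a1 a2,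
      ((φ a1 + φ a2 - 2 • φ a) ⬝ᵥ q = 0 ∧
        ∀ b ∈ Set.Icc a1 a2, (φ a1 + φ a2 - 2 • φ b) ⬝ᵥ q = 0 → b = a) →
      0 < (φ a1 + φ a2 - 2 • φ a) ⬝ᵥ c) :
    ∀ ξ : ℝ,
      ({mm ∈ convexHull ℝ (φ '' Set.Icc a1 a2) | q ⬝ᵥ mm = ξ}).Nonempty →
      ∀ m0 ∈ {mm ∈ convexHull ℝ (φ '' Set.Icc a1 a2) | q ⬝ᵥ mm = ξ},
        (∀ m' ∈ {mm ∈ convexHull ℝ (φ '' Set.Icc a1 a2) | q ⬝ᵥ mm = ξ},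
          c ⬝ᵥ m0 ≤ c ⬝ᵥ m') →
        m0 ∈ φ '' Set.Icc a1 a2 := by
  rintro ξ - m0 ⟨hm0, rfl⟩ hmin
  obtain ⟨ε, -, hε⟩ := hsign
  subst hφ hφ'
  exact mem_image_of_forall_le_on_slice (fun t _ => hasDerivAt_twistedCubic t) hε huniq hm0
    fun m hm hq => hmin m ⟨hm, hq⟩

theorem stmt_14
    (a1 a2 : ℝ) (ha1 : 0 < a1) (ha : a1 ≤ a2)
    (φ φ' : ℝ → Fin 3 → ℝ)
    (hφ : φ = fun t => ![t, t ^ 2, t ^ 3])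
    (hφ' : φ' = fun t => ![1, 2 * t, 3 * t ^ 2])
    (c q : Fin 3 → ℝ)
    (hsign : ∃ ε : ℝ, (ε = 1 ∨ ε = -1) ∧
      ∀ t ∈ Set.Icc a1 a2, ∀ s ∈ Set.Icc a1 a2, s ≠ t →
        0 < ε * ((φ' t ⨯₃ (c ⨯₃ q)) ⬝ᵥ (φ s - φ t)))
    (huniq : ∀ a ∈ Set.Icc a1 a2,
      ((φ a1 + φ a2 - 2 • φ a) ⬝ᵥ q = 0 ∧
        ∀ b ∈ Set.Icc a1 a2, (φ a1 + φ a2 - 2 • φ b) ⬝ᵥ q = 0 → b = a) →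
      0 < (φ a1 + φ a2 - 2 • φ a) ⬝ᵥ c) :
    ∀ ξ : ℝ,
      ({mm ∈ convexHull ℝ (φ '' Set.Icc a1 a2) | q ⬝ᵥ mm = ξ}).Nonempty →
      ∀ m0 ∈ {mm ∈ convexHull ℝ (φ '' Set.Icc a1 a2) | q ⬝ᵥ mm = ξ},
        (∀ m' ∈ {mm ∈ convexHull ℝ (φ '' Set.Icc a1 a2) | q ⬝ᵥ mm = ξ},
          c ⬝ᵥ m0 ≤ c ⬝ᵥ m') →
        m0 ∈ φ '' Set.Icc a1 a2 :=
  stmt_14_general a1 a2 φ φ' hφ hφ' c q hsign huniq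
end
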